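/- arXiv:1509.09054 — 10 statements merged into one kernel-verified Lean document; each statement's English description precedes it below -/
import Mathlib

section
/- For all natural numbers n, i, j with n ≥ 1: U_{n+i}·U_{n+j} − U_{n−1}·U_{n+1+i+j} = U_i·U_j, as an identity of polynomials. -/
open Polynomial Polynomial.Chebyshev

/-- Addition formula for Chebyshev `U`: `U (m + a) = U m * U a - U (m-1) * U (a-1)`. -/
theorem chebyshev_U_add_aux (R : Type*) [CommRing R] (m a : ℤ) :
    U R (m + a) = U R m * U R a - U R (m - 1) * U R (a - 1) := by
  induction a using Polynomial.Chebyshev.induct with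
  | zero => simp
  | one =>
    have h := U_add_one R m
    simp only [U_one]
    rw [show (1 : ℤ) - 1 = 0 by norm_num, U_zero]
    linear_combination (norm := ring_nf) h
  | add_two a ih1 ih2 =>
    have h₁ := U_add_two R (m + a)
    have h₂ := U_add_two R a
    have h₃ := U_add_one R a
    linear_combination (norm := ring_nf)
      h₁ - U R m * h₂ + 2 * (X : R[X]) * ih1 - ih2 + U R (m - 1) * h₃
  | neg_add_one a ih1 ih2 =>
    have h₁ := U_add_two R (m + (-a - 1))
    have h₂ := U_add_two R (-a - 1)
    have h₃ := U_add_two R (-a - 2)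
    linear_combination (norm := ring_nf)
      h₁ + 2 * (X : R[X]) * ih1 - ih2 - U R m * h₂ + U R (m - 1) * h₃

/-- Cassini-type identity for Chebyshev `U`. -/
theorem chebyshev_U_cassini_aux (R : Type*) [CommRing R] (n : ℤ) :
    U R n ^ 2 + U R (n - 1) ^ 2 - 2 * X * U R n * U R (n - 1) = 1 := by
  induction n using Polynomial.Chebyshev.induct with
  | zero => simp
  | one => simp only [U_one, U_zero]; norm_num; ring
  | add_two n ih1 ih2 =>
    have h := U_add_two R n
    linear_combination (norm := ring_nf) ih1 + (U R ((n : ℤ) + 2) - U R n) * h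
  | neg_add_one n ih1 ih2 =>
    have h := U_add_two R (-(n : ℤ) - 2)
    linear_combination (norm := ring_nf) ih1 + (U R (-(n : ℤ) - 2) - U R (-n)) * h

theorem chebyshev_U_vajda (R : Type*) [CommRing R] (n i j : ℕ) (hn : 1 ≤ n) :
    U R ((n : ℤ) + i) * U R ((n : ℤ) + j) - U R ((n : ℤ) - 1) * U R ((n : ℤ) + 1 + i + j) =
      U R (i : ℤ) * U R (j : ℤ) := by
  have h1 := chebyshev_U_add_aux R (n : ℤ) (i : ℤ)
  have h2 := chebyshev_U_add_aux R (n : ℤ) (j : ℤ)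
  have h3 := chebyshev_U_add_aux R (n : ℤ) ((i : ℤ) + j + 1)
  have h3b := chebyshev_U_add_aux R (i : ℤ) ((j : ℤ) + 1)
  have h3c := chebyshev_U_add_aux R (i : ℤ) (j : ℤ)
  have h4 := U_add_one R (j : ℤ)
  have h5 := chebyshev_U_cassini_aux R (n : ℤ)
  rw [show (n : ℤ) + ((i : ℤ) + j + 1) = (n : ℤ) + 1 + i + j by ring] at h3
  rw [show (i : ℤ) + j + 1 - 1 = (i : ℤ) + j by ring] at h3
  rw [show (i : ℤ) + ((j : ℤ) + 1) = (i : ℤ) + j + 1 by ring,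
    show (j : ℤ) + 1 - 1 = (j : ℤ) by ring] at h3b
  rw [h1, h2, h3, h3b, h3c]
  linear_combination (norm := ring_nf)
    (-(U R (n : ℤ) * U R ((n : ℤ) - 1)) * U R (i : ℤ)) * h4 + (U R (i : ℤ) * U R (j : ℤ)) * h5
end

section
/- For all natural numbers n, i, j with n ≥ 1: T_{n+i}·T_{n+j} − T_{n−1}·T_{n+1+i+j} = (1−x²)·U_i·U_j, as an identity of polynomials. -/
open Polynomial Polynomial.Chebyshev

/-!
Solutions of the recurrence `P (k + 2) = 2 X P (k + 1) - P k` are determined by two consecutive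
values, and those vanishing at `-1` are multiples of `U`. For fixed `n` and `i`, the left side of
Vajda's identity solves the recurrence in `j` and vanishes at `j = -1`, so it is its value at
`j = 0` times `U j`; the same argument in `i` reduces that value to the Cassini identity
`T n ^ 2 - T (n - 1) * T (n + 1) = 1 - X ^ 2`, which holds because the recurrence's companion
matrix has determinant one.
-/

namespace Polynomial.Chebyshev

variable (R : Type*) [CommRing R]

theorem eq_mul_U_sub_mul_U_of_add_two {f : ℤ → R[X]}
    (hf : ∀ k, f (k + 2) = 2 * X * f (k + 1) - f k) (k : ℤ) :
    f k = f 0 * U R k - f (-1) * U R (k - 1) := by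
  induction k using Polynomial.Chebyshev.induct with
  | zero => simp
  | one =>
    simp only [U_one, sub_self, U_zero]
    linear_combination (norm := ring_nf) hf (-1)
  | add_two k ih1 ih0 =>
    linear_combination (norm := ring_nf) hf k + 2 * X * ih1 - ih0 - f 0 * U_add_two R k
      + f (-1) * U_add_two R (k - 1)
  | neg_add_one k ih0 ih1 =>
    linear_combination (norm := ring_nf) hf (-k - 1) + 2 * X * ih0 - ih1
      - f 0 * U_add_two R (-k - 1) + f (-1) * U_add_two R (-k - 2)

theorem eq_mul_U_of_add_two {f : ℤ → R[X]} (hf : ∀ k, f (k + 2) = 2 * X * f (k + 1) - f k)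
    (hf₀ : f (-1) = 0) (k : ℤ) : f k = f 0 * U R k := by
  simpa [hf₀] using eq_mul_U_sub_mul_U_of_add_two R hf k

theorem T_sq_sub_T_mul_T (n : ℤ) : T R n ^ 2 - T R (n - 1) * T R (n + 1) = 1 - X ^ 2 := by
  induction n using Int.induction_on with
  | zero => simp [sq]
  | succ n ih =>
    linear_combination (norm := ring_nf) ih - T R n * T_add_two R n + T R (n + 1) * T_add_one R n
  | pred n ih =>
    linear_combination (norm := ring_nf) ih
      + T R (-n - 1) * T_sub_one R (-n) - T R (-n) * T_sub_two R (-n)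

theorem T_mul_T_sub_T_mul_T (n i : ℤ) :
    T R n * T R (n + i) - T R (n - 1) * T R (n + 1 + i) = (1 - X ^ 2) * U R i := by
  rw [eq_mul_U_of_add_two R (f := fun i ↦ T R n * T R (n + i) - T R (n - 1) * T R (n + 1 + i))]
  · simp only [add_zero, ← sq, T_sq_sub_T_mul_T]
  · intro k
    linear_combination (norm := ring_nf)
      T R n * T_add_two R (n + k) - T R (n - 1) * T_add_two R (n + 1 + k)
  · ring_nf

theorem T_vajda (n i j : ℤ) :
    T R (n + i) * T R (n + j) - T R (n - 1) * T R (n + 1 + i + j) =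
      (1 - X ^ 2) * U R i * U R j := by
  rw [eq_mul_U_of_add_two R
    (f := fun j ↦ T R (n + i) * T R (n + j) - T R (n - 1) * T R (n + 1 + i + j))]
  · simp only [add_zero, mul_comm (T R (n + i)), T_mul_T_sub_T_mul_T]
  · intro k
    linear_combination (norm := ring_nf)
      T R (n + i) * T_add_two R (n + k) - T R (n - 1) * T_add_two R (n + 1 + i + k)
  · ring_nf

end Polynomial.Chebyshev

theorem chebyshev_T_vajda_general (R : Type*) [CommRing R] (n i j : ℕ) :
    T R ((n : ℤ) + i) * T R ((n : ℤ) + j) - T R ((n : ℤ) - 1) * T R ((n : ℤ) + 1 + i + j) =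
      (1 - X ^ 2) * U R (i : ℤ) * U R (j : ℤ) :=
  T_vajda R n i j

theorem chebyshev_T_vajda (R : Type*) [CommRing R] (n i j : ℕ) (hn : 1 ≤ n) :
    T R ((n : ℤ) + i) * T R ((n : ℤ) + j) - T R ((n : ℤ) - 1) * T R ((n : ℤ) + 1 + i + j) =
      (1 - X ^ 2) * U R (i : ℤ) * U R (j : ℤ) :=
  chebyshev_T_vajda_general R n i j
end

section
/- For all natural numbers n, i, j with n ≥ 1: T_{n+i}·U_{n+j} − U_{n−1}·T_{n+1+i+j} = T_i·U_j, as an identity of polynomials. -/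
open Polynomial Polynomial.Chebyshev

theorem two_T_mul_U (R : Type*) [CommRing R] (m k : ℤ) :
    2 * T R m * U R k = U R (m + k) + U R (k - m) := by
  induction m using Polynomial.Chebyshev.induct with
  | zero => simp [two_mul]
  | one =>
    have h := U_add_one R k
    rw [T_one, show (1:ℤ) + k = k + 1 by ring]
    linear_combination -h
  | add_two m ih1 ih2 =>
    have h₁ := U_add_two R (m + k)
    have h₂ := U_sub_two R (k - m)
    have h₃ := T_add_two R m
    linear_combination (norm := ring_nf) 2 * U R k * h₃ - h₁ - h₂ - ih2 + 2 * (X : R[X]) * ih1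
  | neg_add_one m ih1 ih2 =>
    have h₁ := U_add_two R (-m - 1 + k)
    have h₂ := U_sub_two R (k - (-m - 1))
    have h₃ := T_add_two R (-m - 1)
    linear_combination (norm := ring_nf) 2 * U R k * h₃ - h₁ - h₂ - ih2 + 2 * (X : R[X]) * ih1

theorem chebyshev_TU_vajda_int (m a b : ℤ) :
    T ℤ (m + a) * U ℤ (m + b) - U ℤ (m - 1) * T ℤ (m + 1 + a + b) =
      T ℤ a * U ℤ b := by
  have h₁ := two_T_mul_U ℤ (m + a) (m + b)
  have h₂ := two_T_mul_U ℤ (m + 1 + a + b) (m - 1)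
  have h₃ := two_T_mul_U ℤ a b
  have h₄ : U ℤ (m - 1 - (m + 1 + a + b)) = -U ℤ (a + b) := by
    have h := U_neg_sub_two ℤ (a + b)
    rw [show m - 1 - (m + 1 + a + b) = -(a + b) - 2 by ring]
    exact h
  have h₅ : (m + a) + (m + b) = m + 1 + a + b + (m - 1) := by ring
  have h₆ : m + b - (m + a) = b - a := by ring
  rw [h₅, h₆] at h₁
  rw [h₄] at h₂
  have key : 2 * (T ℤ (m + a) * U ℤ (m + b) - U ℤ (m - 1) * T ℤ (m + 1 + a + b)) =
      2 * (T ℤ a * U ℤ b) := by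
    linear_combination h₁ - h₂ - h₃
  exact mul_left_cancel₀ (by norm_num : (2 : ℤ[X]) ≠ 0) key

theorem chebyshev_TU_vajda (R : Type*) [CommRing R] (n i j : ℕ) (hn : 1 ≤ n) :
    T R ((n : ℤ) + i) * U R ((n : ℤ) + j) - U R ((n : ℤ) - 1) * T R ((n : ℤ) + 1 + i + j) =
      T R (i : ℤ) * U R (j : ℤ) := by
  have h := congrArg (Polynomial.map (Int.castRingHom R))
    (chebyshev_TU_vajda_int (n : ℤ) (i : ℤ) (j : ℤ))
  simpa [Polynomial.map_sub, Polynomial.map_mul, map_T, map_U] using h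
end

section
/- For all natural numbers n, i, j with n ≥ 1: T_{n+i}·T_{n+j} − (x²−1)·U_{n−1}·U_{n−1+i+j} = T_i·T_j, as an identity of polynomials. -/
/-!
The product-to-sum formulas `2 T_a T_b = T_{a+b} + T_{a-b}` and
`2 (X² - 1) U_{a-1} U_{b-1} = T_{a+b} - T_{a-b}`, applied with `a = n + i`, `b = n + j` and
`a = n`, `b = n + i + j`, turn twice the left-hand side into `T_{i-j} + T_{i+j} = 2 T_i T_j`:
the two terms `T_{2n+i+j}` cancel.
-/

open Polynomial Polynomial.Chebyshev

namespace Polynomial.Chebyshev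

variable (R : Type*) [CommRing R]

theorem eq_zero_of_recurrence {A : Type*} [Ring A] (a : A) {f : ℤ → A}
    (hf : ∀ k, f (k + 2) = 2 * a * f (k + 1) - f k) (h₀ : f 0 = 0) (h₁ : f 1 = 0) (k : ℤ) :
    f k = 0 := by
  induction k using Polynomial.Chebyshev.induct with
  | zero => exact h₀
  | one => exact h₁
  | add_two k ih₁ ih₂ => rw [hf, ih₁, ih₂]; simp
  | neg_add_one k ih₁ ih₂ =>
    have h := hf (-k - 1)
    rw [show -(k : ℤ) - 1 + 2 = -k + 1 by ring, show -(k : ℤ) - 1 + 1 = -k by ring, ih₁, ih₂,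
      mul_zero, zero_sub, zero_eq_neg] at h
    exact h

theorem two_mul_X_sq_sub_one_mul_U_mul_U (m k : ℤ) :
    2 * (X ^ 2 - 1) * U R (m - 1) * U R (k - 1) = T R (m + k) - T R (m - k) := by
  refine sub_eq_zero.mp <| eq_zero_of_recurrence (X : R[X])
    (f := fun k ↦ 2 * (X ^ 2 - 1) * U R (m - 1) * U R (k - 1) - (T R (m + k) - T R (m - k)))
    (fun k ↦ ?_) (by simp) ?_ k
  · have hU := U_add_two R (k - 1)
    have hT₁ := T_add_two R (m + k)
    have hT₂ := T_sub_two R (m - k)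
    linear_combination (norm := ring_nf) 2 * (X ^ 2 - 1) * U R (m - 1) * hU - hT₁ + hT₂
  · have h := one_sub_X_sq_mul_U_eq_pol_in_T R (m - 1)
    rw [sub_add_cancel, show m - 1 + 2 = m + 1 by ring] at h
    simp only [sub_self, U_zero]
    linear_combination -2 * h + T_add_one R m

theorem two_mul_pell_vajda (n i j : ℤ) :
    2 * (T R (n + i) * T R (n + j) - (X ^ 2 - 1) * U R (n - 1) * U R (n - 1 + i + j)) =
      2 * (T R i * T R j) := by
  have hTT := T_mul_T R (n + i) (n + j)
  have hUU := two_mul_X_sq_sub_one_mul_U_mul_U R n (n + i + j)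
  have hT := T_mul_T R i j
  rw [show n + i + j - 1 = n - 1 + i + j by ring, show n - (n + i + j) = -(i + j) by ring,
    T_neg] at hUU
  linear_combination (norm := ring_nf) hTT - hUU - hT

/-- The factor `2` cancels in `ℤ[X]`; every other ring is reached by mapping from `ℤ`. -/
theorem pell_vajda (n i j : ℤ) :
    T R (n + i) * T R (n + j) - (X ^ 2 - 1) * U R (n - 1) * U R (n - 1 + i + j) =
      T R i * T R j := by
  have h := mul_left_cancel₀ two_ne_zero (two_mul_pell_vajda ℤ n i j)
  simpa [map_T, map_U] using congrArg (map (Int.castRingHom R)) h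

end Polynomial.Chebyshev

theorem chebyshev_TT_pell_vajda_general (R : Type*) [CommRing R] (n i j : ℕ) :
    T R ((n : ℤ) + i) * T R ((n : ℤ) + j) -
      (X ^ 2 - 1) * U R ((n : ℤ) - 1) * U R ((n : ℤ) - 1 + i + j) =
      T R (i : ℤ) * T R (j : ℤ) :=
  pell_vajda R n i j

theorem chebyshev_TT_pell_vajda (R : Type*) [CommRing R] (n i j : ℕ) (hn : 1 ≤ n) :
    T R ((n : ℤ) + i) * T R ((n : ℤ) + j) -
      (X ^ 2 - 1) * U R ((n : ℤ) - 1) * U R ((n : ℤ) - 1 + i + j) =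
      T R (i : ℤ) * T R (j : ℤ) :=
  chebyshev_TT_pell_vajda_general R n i j
end

section
/- For every real x and every n ≥ 1, U_n(x)² > U_{n+1}(x)·U_{n−1}(x) (Turán's inequality for Chebyshev polynomials of the second kind). -/
open Polynomial Polynomial.Chebyshev

lemma U_turan_id (x : ℝ) : ∀ n : ℕ,
    (U ℝ (n : ℤ)).eval x ^ 2 - (U ℝ ((n : ℤ) + 1)).eval x * (U ℝ ((n : ℤ) - 1)).eval x = 1 := by
  intro n
  induction n with
  | zero => simp [U_zero, U_one, U_neg_one]
  | succ k ih =>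
    have h1 : U ℝ ((k : ℤ) + 1 + 1) = 2 * X * U ℝ ((k : ℤ) + 1) - U ℝ (k : ℤ) := by
      simpa using U_add_one ℝ ((k : ℤ) + 1)
    have h4 : (U ℝ ((k : ℤ) - 1)).eval x = 2 * x * (U ℝ (k : ℤ)).eval x - (U ℝ ((k : ℤ) + 1)).eval x := by
      rw [U_sub_one]; simp
    have h2 : ((k + 1 : ℕ) : ℤ) = (k : ℤ) + 1 := by push_cast; ring
    rw [h2]
    have h3 : (k : ℤ) + 1 - 1 = (k : ℤ) := by ring
    rw [h3, h1]
    simp only [eval_sub, eval_mul, eval_ofNat, eval_X]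
    rw [h4] at ih
    linear_combination ih

theorem chebyshev_U_turan (x : ℝ) (n : ℕ) (hn : 1 ≤ n) :
    (U ℝ ((n : ℤ) + 1)).eval x * (U ℝ ((n : ℤ) - 1)).eval x < (U ℝ (n : ℤ)).eval x ^ 2 := by
  have := U_turan_id x n
  linarith
end

section
/- For all n ≥ 2 and all d ≥ 1: U_{(n−1)d−1} · (U_{n−1} ∘ T_d) = U_{nd−1} · (U_{n−2} ∘ T_d), as an identity of polynomials, where ∘ denotes polynomial composition. -/
open Polynomial Polynomial.Chebyshev

theorem mul_T_U (R : Type*) [CommRing R] (m k : ℤ) :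
    2 * T R k * U R m = U R (m + k) + U R (m - k) := by
  induction k using Polynomial.Chebyshev.induct with
  | zero => simp [two_mul]
  | one => rw [U_add_one, U_sub_one, T_one]; ring
  | add_two k ih1 ih2 =>
    have h₁ := U_add_two R (m + k)
    have h₂ := U_sub_two R (m - k)
    have h₃ := T_add_two R k
    linear_combination (norm := ring_nf) 2 * U R m * h₃ - h₂ - h₁ - ih2 + 2 * (X : R[X]) * ih1
  | neg_add_one k ih1 ih2 =>
    have h₁ := U_add_two R (m + (-k - 1))
    have h₂ := U_sub_two R (m - (-k - 1))
    have h₃ := T_add_two R (-k - 1)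
    linear_combination (norm := ring_nf) 2 * U R m * h₃ - h₂ - h₁ - ih2 + 2 * (X : R[X]) * ih1

theorem U_mul_aux (R : Type*) [CommRing R] (m d : ℤ) :
    U R (m * d - 1) = (U R (m - 1)).comp (T R d) * U R (d - 1) := by
  induction m using Polynomial.Chebyshev.induct with
  | zero => simp
  | one => simp
  | add_two m ih1 ih2 =>
    have h₁ := mul_T_U R ((m + 1) * d - 1) d
    have h₂ := congr_arg (comp · (T R d)) <| U_add_two R (m - 1)
    simp only [sub_comp, mul_comp, ofNat_comp, X_comp] at h₂
    have e1 : ((m : ℤ) + 2) * d - 1 = (m + 1) * d - 1 + d := by ring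
    have e2 : ((m : ℤ) + 1) * d - 1 - d = m * d - 1 := by ring
    have e3 : (m : ℤ) - 1 + 2 = m + 2 - 1 := by ring
    rw [e2] at h₁; rw [e3] at h₂; rw [e1]
    linear_combination (norm := ring_nf) -h₁ - U R (d-1) * h₂ - ih2 + 2 * T R d * ih1
  | neg_add_one m ih1 ih2 =>
    have h₁ := mul_T_U R ((-m) * d - 1) d
    have h₂ := congr_arg (comp · (T R d)) <| U_add_two R (-m - 2)
    simp only [sub_comp, mul_comp, ofNat_comp, X_comp] at h₂
    have e1 : (-(m : ℤ)) * d - 1 + d = (-m + 1) * d - 1 := by ring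
    have e2 : (-(m : ℤ)) * d - 1 - d = (-m - 1) * d - 1 := by ring
    have e3 : -(m : ℤ) - 2 + 2 = -m := by ring
    have e4 : -(m : ℤ) - 2 + 1 = -m - 1 := by ring
    have e5 : -(m : ℤ) + 1 - 1 = -m := by ring
    have e6 : -(m : ℤ) - 1 - 1 = -m - 2 := by ring
    rw [e1, e2] at h₁; rw [e3, e4] at h₂
    rw [e5] at ih2; rw [e6]
    linear_combination (norm := ring_nf) -h₁ - U R (d-1) * h₂ - ih2 + 2 * T R d * ih1

theorem chebyshev_UUT_shift (R : Type*) [CommRing R] (n d : ℕ) (hn : 2 ≤ n) (hd : 1 ≤ d) :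
    U R (((n : ℤ) - 1) * d - 1) * (U R ((n : ℤ) - 1)).comp (T R (d : ℤ)) =
      U R ((n : ℤ) * d - 1) * (U R ((n : ℤ) - 2)).comp (T R (d : ℤ)) := by
  rw [U_mul_aux R ((n : ℤ) - 1) d, U_mul_aux R (n : ℤ) d]
  have : (n : ℤ) - 1 - 1 = (n : ℤ) - 2 := by ring
  rw [this]; ring
end

section
/- For all n ∈ ℕ and d ≥ 1, the rational function S_{n,d} = Σ_{k=0}^n (U_{d−1} ∘ T_{(d+1)^k}) · Π_{j=0}^k 1/(U_d ∘ T_{(d+1)^j}) satisfies S_{n,d}² − 2x·S_{n,d} + 1 = (Π_{j=0}^n 1/(U_d ∘ T_{(d+1)^j}))². -/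
open Polynomial Polynomial.Chebyshev Finset

noncomputable def toRat (p : Polynomial ℚ) : RatFunc ℚ := algebraMap (Polynomial ℚ) (RatFunc ℚ) p

noncomputable def Sfrac (n d : ℕ) : RatFunc ℚ :=
  ∑ k ∈ Finset.range (n + 1),
    toRat ((U ℚ ((d : ℤ) - 1)).comp (T ℚ (((d + 1) ^ k : ℕ) : ℤ))) *
      ∏ j ∈ Finset.range (k + 1), (toRat ((U ℚ (d : ℤ)).comp (T ℚ (((d + 1) ^ j : ℕ) : ℤ))))⁻¹

/-!
Write `m = (d+1)^k` and `M = (d+1)^(n+1)`. Composing `X U_d - T_{d+1} = U_{d-1}` with `T_m` and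
using `T_{d+1} ∘ T_m = T_{(d+1)m}` gives `U_{d-1} ∘ T_m = T_m (U_d ∘ T_m) - T_{(d+1)m}`, so the
sum telescopes: `S = X - T_M P`, where `P` is the product. From `2 T_m U_k = U_{k+m} + U_{k-m}`
one gets `(U_d ∘ T_m) U_{m-1} = U_{(d+1)m-1}`, hence `P = 1 / U_{M-1}`. Then
`S² - 2XS + 1 = (S - X)² + 1 - X² = P² (T_M² + (1 - X²) U_{M-1}²)`, which is `P²` by the Pell
identity `T_M² + (1 - X²) U_{M-1}² = 1`.
-/

namespace Polynomial.Chebyshev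

variable {R : Type*} [CommRing R]

theorem T_mul_U (m k : ℤ) : 2 * T R m * U R k = U R (k + m) + U R (k - m) := by
  induction m using Polynomial.Chebyshev.induct with
  | zero => simp [two_mul]
  | one => rw [T_one, U_add_one, U_sub_one]; ring
  | add_two m ih1 ih2 =>
    have h₁ := U_add_two R (k + m)
    have h₂ := U_sub_two R (k - m)
    have h₃ := T_add_two R m
    linear_combination (norm := ring_nf) 2 * U R k * h₃ - h₂ - h₁ - ih2 + 2 * (X : R[X]) * ih1
  | neg_add_one m ih1 ih2 =>
    have h₁ := U_add_two R (k + (-m - 1))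
    have h₂ := U_sub_two R (k - (-m - 1))
    have h₃ := T_add_two R (-m - 1)
    linear_combination (norm := ring_nf) 2 * U R k * h₃ - h₂ - h₁ - ih2 + 2 * (X : R[X]) * ih1

theorem T_sq_add_one_sub_X_sq_mul_U_sq (n : ℤ) :
    T R n ^ 2 + (1 - X ^ 2) * U R (n - 1) ^ 2 = 1 := by
  have step (n : ℤ) : T R (n + 1) ^ 2 + (1 - X ^ 2) * U R n ^ 2
      = T R n ^ 2 + (1 - X ^ 2) * U R (n - 1) ^ 2 := by
    have hT := T_eq_X_mul_T_sub_pol_U R (n - 1)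
    have hU := U_eq_X_mul_U_add_T R (n - 1)
    simp only [sub_add_cancel, show n - 1 + 2 = n + 1 by ring] at hT hU
    rw [hT, hU]
    ring
  induction n using Int.induction_on with
  | zero => simp
  | succ n ih => rw [add_sub_cancel_right, step, ih]
  | pred n ih => rw [← step, sub_add_cancel, ih]

theorem X_mul_U_sub_T (n : ℤ) : X * U R n - T R (n + 1) = U R (n - 1) := by
  linear_combination (norm := ring_nf) -T_eq_U_sub_X_mul_U R (n + 1) - U_add_one R n

theorem T_mul_U_comp_T_sub_T (d m : ℤ) :
    T R m * (U R d).comp (T R m) - T R ((d + 1) * m) = (U R (d - 1)).comp (T R m) := by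
  simpa only [sub_comp, mul_comp, X_comp, ← T_mul] using
    congrArg (comp · (T R m)) (X_mul_U_sub_T (R := R) d)

theorem U_comp_T_mul_U (d m : ℤ) :
    (U R d).comp (T R m) * U R (m - 1) = U R ((d + 1) * m - 1) := by
  induction d using Polynomial.Chebyshev.induct with
  | zero => simp
  | one =>
    simp only [U_one, mul_comp, X_comp, ofNat_comp]
    linear_combination (norm := ring_nf) T_mul_U (R := R) m (m - 1) + U_neg_one R
  | add_two d ih1 ih2 =>
    have h₁ := congrArg (fun p => p.comp (T R m) * U R (m - 1)) (U_add_two R d)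
    have h₂ := T_mul_U (R := R) m ((d + 2) * m - 1)
    simp only [sub_comp, mul_comp, X_comp, ofNat_comp] at h₁
    linear_combination (norm := ring_nf) h₁ + 2 * T R m * ih1 - ih2 + h₂
  | neg_add_one d ih1 ih2 =>
    have h₁ := congrArg (fun p => p.comp (T R m) * U R (m - 1)) (U_add_two R (-d - 1))
    have h₂ := T_mul_U (R := R) m ((-d + 1) * m - 1)
    simp only [sub_comp, mul_comp, X_comp, ofNat_comp] at h₁
    linear_combination (norm := ring_nf) h₁ + 2 * T R m * ih1 - ih2 + h₂

theorem prod_U_comp_T_pow (d : ℤ) (n : ℕ) :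
    ∏ j ∈ range n, (U R d).comp (T R ((d + 1) ^ j)) = U R ((d + 1) ^ n - 1) := by
  induction n with
  | zero => simp
  | succ n ih => rw [prod_range_succ, ih, mul_comm, U_comp_T_mul_U, pow_succ', mul_comm]

theorem U_comp_T_ne_zero [IsDomain R] [NeZero (2 : R)] {d m : ℤ} (hd : d ≠ -1) (hm : m ≠ 0) :
    (U R d).comp (T R m) ≠ 0 := by
  refine left_ne_zero_of_mul (b := U R (m - 1)) ?_
  rw [U_comp_T_mul_U]
  have : (d + 1) * m ≠ 0 := mul_ne_zero (by omega) hm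
  exact U_ne_zero R _ (by contrapose! this; linarith)

end Polynomial.Chebyshev

theorem Finset.sum_range_mul_prod_inv_eq_sub {K : Type*} [Field K] {t u v : ℕ → K}
    (hu : ∀ k, u k ≠ 0) (h : ∀ k, t k * u k - t (k + 1) = v k) (n : ℕ) :
    ∑ k ∈ range n, v k * ∏ j ∈ range (k + 1), (u j)⁻¹ = t 0 - t n * ∏ j ∈ range n, (u j)⁻¹ := by
  let f k := t k * ∏ j ∈ range k, (u j)⁻¹
  calc ∑ k ∈ range n, v k * ∏ j ∈ range (k + 1), (u j)⁻¹
      = ∑ k ∈ range n, (f k - f (k + 1)) := by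
        refine sum_congr rfl fun k _ => ?_
        simp only [f, prod_range_succ, ← h k]
        field_simp [hu k]
    _ = t 0 - t n * ∏ j ∈ range n, (u j)⁻¹ := by rw [sum_range_sub']; simp [f]

theorem Sfrac_eq_X_sub_T_mul_prod (n d : ℕ) :
    Sfrac n d = toRat X - toRat (T ℚ (((d + 1) ^ (n + 1) : ℕ) : ℤ)) *
      ∏ j ∈ range (n + 1), (toRat ((U ℚ (d : ℤ)).comp (T ℚ (((d + 1) ^ j : ℕ) : ℤ))))⁻¹ := by
  have hu (k : ℕ) : toRat ((U ℚ (d : ℤ)).comp (T ℚ (((d + 1) ^ k : ℕ) : ℤ))) ≠ 0 :=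
    RatFunc.algebraMap_ne_zero (U_comp_T_ne_zero (by omega) (by positivity))
  have h (k : ℕ) : toRat (T ℚ (((d + 1) ^ k : ℕ) : ℤ)) *
        toRat ((U ℚ (d : ℤ)).comp (T ℚ (((d + 1) ^ k : ℕ) : ℤ))) -
        toRat (T ℚ (((d + 1) ^ (k + 1) : ℕ) : ℤ)) =
      toRat ((U ℚ ((d : ℤ) - 1)).comp (T ℚ (((d + 1) ^ k : ℕ) : ℤ))) := by
    have := T_mul_U_comp_T_sub_T (R := ℚ) d ((d + 1) ^ k : ℕ)
    rw [show ((d : ℤ) + 1) * (((d + 1) ^ k : ℕ) : ℤ) = (((d + 1) ^ (k + 1) : ℕ) : ℤ) by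
      push_cast; ring] at this
    simp only [toRat, ← this, map_sub, map_mul]
  rw [Sfrac, sum_range_mul_prod_inv_eq_sub hu h]
  simp

theorem prod_inv_toRat_U_comp_T (n d : ℕ) :
    ∏ j ∈ range n, (toRat ((U ℚ (d : ℤ)).comp (T ℚ (((d + 1) ^ j : ℕ) : ℤ))))⁻¹ =
      (toRat (U ℚ ((((d + 1) ^ n : ℕ) : ℤ) - 1)))⁻¹ := by
  push_cast
  rw [← prod_U_comp_T_pow, prod_inv_distrib, toRat, map_prod]
  rfl

theorem Sfrac_quadratic_general (n d : ℕ) :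
    Sfrac n d ^ 2 - 2 * toRat X * Sfrac n d + 1 =
      (∏ j ∈ Finset.range (n + 1), (toRat ((U ℚ (d : ℤ)).comp (T ℚ (((d + 1) ^ j : ℕ) : ℤ))))⁻¹) ^ 2 := by
  rw [Sfrac_eq_X_sub_T_mul_prod, prod_inv_toRat_U_comp_T]
  have hM : 1 ≤ (d + 1) ^ (n + 1) := Nat.one_le_pow _ _ d.succ_pos
  have hw : toRat (U ℚ ((((d + 1) ^ (n + 1) : ℕ) : ℤ) - 1)) ≠ 0 :=
    RatFunc.algebraMap_ne_zero (U_ne_zero ℚ _ (by omega))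
  have hpell := congrArg toRat (T_sq_add_one_sub_X_sq_mul_U_sq (R := ℚ) ((d + 1) ^ (n + 1) : ℕ))
  simp only [toRat, map_add, map_mul, map_sub, map_pow, map_one] at hpell hw ⊢
  field_simp
  linear_combination hpell

theorem Sfrac_quadratic (n d : ℕ) (hd : 1 ≤ d) :
    Sfrac n d ^ 2 - 2 * toRat X * Sfrac n d + 1 =
      (∏ j ∈ Finset.range (n + 1), (toRat ((U ℚ (d : ℤ)).comp (T ℚ (((d + 1) ^ j : ℕ) : ℤ))))⁻¹) ^ 2 :=
  Sfrac_quadratic_general n d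
end

section
/- For natural numbers a, d, n with n ≤ d, the function f(a,d,n)_x = Σ_{k=0}^{d−n} C(a+d+x−k, k)·C(d+k−x, d−n−k) (with C(y,k) = y(y−1)···(y−k+1)/k! a polynomial in y) is constant as a polynomial in x. -/
/-!
Let `S m u v = ∑_{k ≤ m} C(u - k, k) C(v + k, m - k)` (`chooseDiagSum`), so that the sum in
question is `S (d - n) (a + d + x) (d - x)`. Pascal's rule, applied once in each factor, gives the
recurrences `S (m+1) u (v+1) = S (m+1) u v + S m u v` and
`S (m+1) (u+1) v = S (m+1) u v + S m (u-1) (v+1)`, from which induction on `m` yields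
`S m (u+1) v = S m u (v+1)`. Hence `x ↦ S m (u + x) (v - x)` is a polynomial in `x` of period `1`,
so it takes the same value at all natural numbers and is therefore constant.
-/

open Finset

/-- Generalized binomial coefficient `C(y,k) = y(y-1)⋯(y-k+1)/k!`. -/
noncomputable def gchoose (y : ℚ) (k : ℕ) : ℚ := (descPochhammer ℚ k).eval y / (k.factorial : ℚ)

open Polynomial

section BinomialRing

variable {R : Type*} [CommRing R] [BinomialRing R]

noncomputable def chooseDiagSum (m : ℕ) (u v : R) : R :=
  ∑ k ∈ range (m + 1), Ring.choose (u - k) k * Ring.choose (v + k) (m - k)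

theorem chooseDiagSum_zero (u v : R) : chooseDiagSum 0 u v = 1 := by
  simp [chooseDiagSum]

theorem chooseDiagSum_succ_add_one_right (m : ℕ) (u v : R) :
    chooseDiagSum (m + 1) u (v + 1) = chooseDiagSum (m + 1) u v + chooseDiagSum m u v := by
  have pascal : ∀ k ∈ range (m + 1),
      Ring.choose (u - k) k * Ring.choose (v + 1 + k) (m + 1 - k) =
        Ring.choose (u - k) k * Ring.choose (v + k) (m + 1 - k) +
          Ring.choose (u - k) k * Ring.choose (v + k) (m - k) := by
    intro k hk
    rw [Nat.sub_add_comm (mem_range_succ_iff.mp hk), add_right_comm, Ring.choose_succ_succ]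
    ring
  simp only [chooseDiagSum, sum_range_succ _ (m + 1), sum_congr rfl pascal, sum_add_distrib,
    Nat.sub_self, Ring.choose_zero_right]
  ring

theorem chooseDiagSum_succ_add_one_left (m : ℕ) (u v : R) :
    chooseDiagSum (m + 1) (u + 1) v =
      chooseDiagSum (m + 1) u v + chooseDiagSum m (u - 1) (v + 1) := by
  have pascal : ∀ j ∈ range (m + 1),
      Ring.choose (u + 1 - (j + 1 : ℕ)) (j + 1) *
          Ring.choose (v + (j + 1 : ℕ)) (m + 1 - (j + 1)) =
        Ring.choose (u - (j + 1 : ℕ)) (j + 1) *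
            Ring.choose (v + (j + 1 : ℕ)) (m + 1 - (j + 1)) +
          Ring.choose (u - 1 - j) j * Ring.choose (v + 1 + j) (m - j) := by
    intro j _
    rw [show u + 1 - (j + 1 : ℕ) = u - (j + 1 : ℕ) + 1 by ring, Ring.choose_succ_succ,
      Nat.add_sub_add_right]
    push_cast
    ring_nf
  simp only [chooseDiagSum, sum_range_succ' _ (m + 1), sum_congr rfl pascal, sum_add_distrib]
  simp only [Nat.cast_zero, sub_zero, add_zero, Ring.choose_zero_right]
  ring

theorem chooseDiagSum_add_one_left (m : ℕ) (u v : R) :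
    chooseDiagSum m (u + 1) v = chooseDiagSum m u (v + 1) := by
  induction m generalizing u v with
  | zero => simp only [chooseDiagSum_zero]
  | succ m ih =>
    rw [chooseDiagSum_succ_add_one_left, chooseDiagSum_succ_add_one_right, ← ih, sub_add_cancel]

end BinomialRing

theorem Ring.choose_eq_inv_factorial_mul_eval {K : Type*} [Field K] [CharZero K] (a : K) (k : ℕ) :
    Ring.choose a k = (k.factorial : K)⁻¹ * (descPochhammer K k).eval a := by
  rw [Ring.choose_eq_smul, smul_eq_mul, ← aeval_eq_smeval, aeval_def, ← eval_map,
    descPochhammer_map]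

theorem Polynomial.eval_eq_eval_zero_of_eval_add_one {R : Type*} [CommRing R] [IsDomain R]
    [CharZero R] {p : R[X]} (h : ∀ t, p.eval (t + 1) = p.eval t) (x : R) :
    p.eval x = p.eval 0 := by
  have eval_natCast : ∀ n : ℕ, p.eval (n : R) = p.eval 0 := by
    intro n
    induction n with
    | zero => simp
    | succ n ih => rw [Nat.cast_succ, h, ih]
  have : p - C (p.eval 0) = 0 := by
    refine eq_zero_of_infinite_isRoot _
      ((Set.infinite_range_of_injective Nat.cast_injective).mono ?_)
    rintro _ ⟨n, rfl⟩
    simp [eval_natCast]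
  simpa [sub_eq_zero] using congrArg (eval x) this

section CharZeroField

variable {K : Type*} [Field K] [CharZero K]

theorem exists_eval_eq_chooseDiagSum_add_sub (m : ℕ) (u v : K) :
    ∃ p : K[X], ∀ t, p.eval t = chooseDiagSum m (u + t) (v - t) := by
  refine ⟨∑ k ∈ range (m + 1),
    C (k.factorial : K)⁻¹ * (descPochhammer K k).comp (C u + X - C (k : K)) *
      (C ((m - k).factorial : K)⁻¹ * (descPochhammer K (m - k)).comp (C v - X + C (k : K))),
    fun t => ?_⟩
  simp only [chooseDiagSum, Ring.choose_eq_inv_factorial_mul_eval, eval_finsetSum, eval_mul,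
    eval_comp, eval_add, eval_sub, eval_C, eval_X]

theorem chooseDiagSum_add_sub (m : ℕ) (u v x : K) :
    chooseDiagSum m (u + x) (v - x) = chooseDiagSum m u v := by
  obtain ⟨p, hp⟩ := exists_eval_eq_chooseDiagSum_add_sub m u v
  have periodic : ∀ t, p.eval (t + 1) = p.eval t := fun t => by
    rw [hp, hp, ← add_assoc, chooseDiagSum_add_one_left, sub_add_eq_sub_sub, sub_add_cancel]
  simpa [hp] using p.eval_eq_eval_zero_of_eval_add_one periodic x

end CharZeroField

theorem gchoose_eq_choose (y : ℚ) (k : ℕ) : gchoose y k = Ring.choose y k := by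
  rw [Ring.choose_eq_inv_factorial_mul_eval, gchoose, div_eq_inv_mul]

theorem f_const_general (a d n : ℕ) (x y : ℚ) :
    ∑ k ∈ Finset.range (d - n + 1), gchoose ((a : ℚ) + d + x - k) k * gchoose ((d : ℚ) + k - x) (d - n - k) =
      ∑ k ∈ Finset.range (d - n + 1), gchoose ((a : ℚ) + d + y - k) k * gchoose ((d : ℚ) + k - y) (d - n - k) := by
  have eq_chooseDiagSum : ∀ z : ℚ, ∑ k ∈ range (d - n + 1),
      gchoose ((a : ℚ) + d + z - k) k * gchoose ((d : ℚ) + k - z) (d - n - k) =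
        chooseDiagSum (d - n) ((a : ℚ) + d + z) (d - z) := fun z => by
    simp only [chooseDiagSum, gchoose_eq_choose, sub_add_eq_add_sub]
  rw [eq_chooseDiagSum x, eq_chooseDiagSum y, chooseDiagSum_add_sub, chooseDiagSum_add_sub]

theorem f_const (a d n : ℕ) (hnd : n ≤ d) (x y : ℚ) :
    ∑ k ∈ Finset.range (d - n + 1), gchoose ((a : ℚ) + d + x - k) k * gchoose ((d : ℚ) + k - x) (d - n - k) =
      ∑ k ∈ Finset.range (d - n + 1), gchoose ((a : ℚ) + d + y - k) k * gchoose ((d : ℚ) + k - y) (d - n - k) :=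
  f_const_general a d n x y
end

section
/- Define l_{i,j} = Σ_{k=0}^{i−j} C((i−1)/2 + x − k, k)·C((i−1)/2 + k − x, i−j−k) evaluated at x = (i−1)/2 (using generalized binomial coefficients). Then l_{i,0} = (−1)^i, l_{i,i} = 1, and l_{i,j} = l_{i−1,j−1} + l_{i−1,j} for 1 ≤ j ≤ i−1. -/
open Finset Polynomial

/-- `l i j`, the sum defining the Pascal-like triangle, evaluated at `x = (i-1)/2`. -/
noncomputable def lTriangle (i j : ℕ) : ℚ :=
  ∑ k ∈ Finset.range (i - j + 1), gchoose ((i : ℚ) - 1 - k) k * gchoose (k : ℚ) (i - j - k)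

lemma gchoose_zero (y : ℚ) : gchoose y 0 = 1 := by
  simp [gchoose]

lemma gchoose_pascal (y : ℚ) (k : ℕ) :
    gchoose y (k + 1) = gchoose (y - 1) (k + 1) + gchoose (y - 1) k := by
  have h1 : (descPochhammer ℚ (k + 1)).eval y = y * (descPochhammer ℚ k).eval (y - 1) := by
    rw [descPochhammer_succ_left]
    simp [eval_comp]
  have h2 := descPochhammer_succ_eval (k := y - 1) k
  have hf : ((k + 1).factorial : ℚ) = ((k : ℚ) + 1) * (k.factorial : ℚ) := by
    rw [Nat.factorial_succ]; push_cast; ring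
  have hk0 : (k.factorial : ℚ) ≠ 0 := by exact_mod_cast k.factorial_ne_zero
  have hk1 : ((k : ℚ) + 1) ≠ 0 := by positivity
  unfold gchoose
  rw [h1, h2, hf]
  field_simp
  ring

lemma gchoose_nat_lt {m k : ℕ} (h : m < k) : gchoose (m : ℚ) k = 0 := by
  unfold gchoose
  rw [descPochhammer_eval_eq_descFactorial, Nat.descFactorial_eq_zero_iff_lt.mpr h]
  simp

lemma gchoose_neg_one (k : ℕ) : gchoose (-1 : ℚ) k = (-1) ^ k := by
  induction k with
  | zero => simp [gchoose]
  | succ k ih =>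
    have h2 := descPochhammer_succ_eval (k := (-1 : ℚ)) k
    have hf : ((k + 1).factorial : ℚ) = ((k : ℚ) + 1) * (k.factorial : ℚ) := by
      rw [Nat.factorial_succ]; push_cast; ring
    have hk0 : (k.factorial : ℚ) ≠ 0 := by exact_mod_cast k.factorial_ne_zero
    have hk1 : ((k : ℚ) + 1) ≠ 0 := by positivity
    unfold gchoose at ih ⊢
    rw [h2, hf]
    rw [div_eq_iff hk0] at ih
    rw [ih]
    field_simp
    ring

/-- The key identity, proved by induction on `m` with `a` arbitrary. -/
lemma dagger : ∀ (m : ℕ) (a : ℚ),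
    ∑ k ∈ range (m + 1), gchoose (a - 1 - k) k * gchoose ((k : ℚ) + 1) (m - k)
      = ∑ k ∈ range (m + 1), gchoose (a - k) k * gchoose (k : ℚ) (m - k) := by
  intro m
  induction m with
  | zero => intro a; simp [gchoose_zero]
  | succ m ih =>
    intro a
    have hmidL : ∀ k ∈ range (m + 1),
        gchoose (a - 1 - k) k * gchoose ((k : ℚ) + 1) (m + 1 - k)
          = gchoose (a - 1 - k) k * gchoose (k : ℚ) (m + 1 - k)
            + gchoose (a - 1 - k) k * gchoose (k : ℚ) (m - k) := by
      intro k hk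
      rw [mem_range] at hk
      have h1 : m + 1 - k = (m - k) + 1 := by omega
      rw [h1, gchoose_pascal ((k : ℚ) + 1) (m - k)]
      ring_nf
    have h1 : ∑ k ∈ range (m + 2), gchoose (a - 1 - k) k * gchoose ((k : ℚ) + 1) (m + 1 - k)
        = (∑ k ∈ range (m + 2), gchoose (a - 1 - k) k * gchoose (k : ℚ) (m + 1 - k))
          + ∑ k ∈ range (m + 1), gchoose (a - 1 - k) k * gchoose (k : ℚ) (m - k) := by
      rw [sum_range_succ, sum_congr rfl hmidL, sum_add_distrib]
      conv_rhs => rw [sum_range_succ]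
      simp only [Nat.sub_self, gchoose_zero, mul_one]
      ring
    have hmidR : ∀ k ∈ range (m + 1),
        gchoose (a - ((k + 1 : ℕ) : ℚ)) (k + 1) * gchoose (((k + 1 : ℕ) : ℚ)) (m + 1 - (k + 1))
          = gchoose (a - 1 - 1 - k) (k + 1) * gchoose ((k : ℚ) + 1) (m - k)
            + gchoose (a - 1 - 1 - k) k * gchoose ((k : ℚ) + 1) (m - k) := by
      intro k hk
      have hn1 : m + 1 - (k + 1) = m - k := by omega
      have h2 := gchoose_pascal (a - ((k + 1 : ℕ) : ℚ)) k
      have he : a - ((k + 1 : ℕ) : ℚ) - 1 = a - 1 - 1 - k := by push_cast; ring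
      rw [hn1, h2, he]
      push_cast
      ring
    have hS : (∑ k ∈ range (m + 2), gchoose (a - 1 - k) k * gchoose (k : ℚ) (m + 1 - k))
        = (∑ k ∈ range (m + 1), gchoose (a - 1 - 1 - k) (k + 1) * gchoose ((k : ℚ) + 1) (m - k))
          + gchoose (((0 : ℕ)) : ℚ) (m + 1) := by
      rw [sum_range_succ' _ (m + 1)]
      congr 1
      · apply sum_congr rfl
        intro k hk
        have hn1 : m + 1 - (k + 1) = m - k := by omega
        have he : a - 1 - ((k + 1 : ℕ) : ℚ) = a - 1 - 1 - k := by push_cast; ring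
        rw [hn1, he]
        push_cast
        ring
      · simp [gchoose_zero]
    have h2 : ∑ k ∈ range (m + 2), gchoose (a - k) k * gchoose (k : ℚ) (m + 1 - k)
        = (∑ k ∈ range (m + 1), gchoose (a - 1 - 1 - k) (k + 1) * gchoose ((k : ℚ) + 1) (m - k))
          + (∑ k ∈ range (m + 1), gchoose (a - 1 - k) k * gchoose (k : ℚ) (m - k))
          + gchoose (((0 : ℕ)) : ℚ) (m + 1) := by
      rw [sum_range_succ' _ (m + 1), sum_congr rfl hmidR, sum_add_distrib, ih (a - 1)]
      simp only [Nat.cast_zero, Nat.sub_zero, gchoose_zero, one_mul]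
    rw [h1, h2, hS]
    ring

theorem lTriangle_pascal :
    (∀ i : ℕ, lTriangle i 0 = (-1) ^ i) ∧
    (∀ i : ℕ, lTriangle i i = 1) ∧
    (∀ i j : ℕ, 1 ≤ j → j ≤ i - 1 →
      lTriangle i j = lTriangle (i - 1) (j - 1) + lTriangle (i - 1) j) := by
  refine ⟨?_, ?_, ?_⟩
  · -- l i 0 = (-1)^i
    intro i
    unfold lTriangle
    rw [Nat.sub_zero, sum_range_succ]
    have htop : gchoose ((i : ℚ) - 1 - i) i * gchoose ((i : ℚ)) (i - i) = (-1) ^ i := by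
      have h : (i : ℚ) - 1 - i = -1 := by ring
      rw [h, Nat.sub_self, gchoose_zero, gchoose_neg_one, mul_one]
    have hzero : ∀ k ∈ range i, gchoose ((i : ℚ) - 1 - k) k * gchoose (k : ℚ) (i - k) = 0 := by
      intro k hk
      rw [mem_range] at hk
      rcases lt_or_ge k (i - k) with h | h
      · rw [gchoose_nat_lt h, mul_zero]
      · have hk1 : i - 1 - k < k := by omega
        have hk2 : (i : ℚ) - 1 - k = ((i - 1 - k : ℕ) : ℚ) := by
          rw [Nat.cast_sub (by omega : k ≤ i - 1), Nat.cast_sub (by omega : 1 ≤ i)]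
          push_cast
          ring
        rw [hk2, gchoose_nat_lt hk1, zero_mul]
    rw [sum_eq_zero hzero, htop, zero_add]
  · -- l i i = 1
    intro i
    unfold lTriangle
    simp [Nat.sub_self, gchoose_zero]
  · -- Pascal
    intro i j hj hji
    have hi : 2 ≤ i := by omega
    obtain ⟨n, hn⟩ : ∃ n, i - j = n + 1 := ⟨i - j - 1, by omega⟩
    unfold lTriangle
    have e1 : (i - 1) - (j - 1) = n + 1 := by omega
    have e2 : (i - 1) - j = n := by omega
    rw [hn, e1, e2]
    have hcast : ((i - 1 : ℕ) : ℚ) = (i : ℚ) - 1 := by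
      rw [Nat.cast_sub (by omega : 1 ≤ i)]; push_cast; ring
    have hmid : ∀ k ∈ range (n + 1),
        gchoose ((i : ℚ) - 1 - ((k + 1 : ℕ) : ℚ)) (k + 1) * gchoose (((k + 1 : ℕ) : ℚ)) (n + 1 - (k + 1))
          = gchoose ((i : ℚ) - 3 - k) (k + 1) * gchoose ((k : ℚ) + 1) (n - k)
            + gchoose ((i : ℚ) - 2 - 1 - k) k * gchoose ((k : ℚ) + 1) (n - k) := by
      intro k hk
      have hn1 : n + 1 - (k + 1) = n - k := by omega
      have h2 := gchoose_pascal ((i : ℚ) - 1 - ((k + 1 : ℕ) : ℚ)) k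
      have he : (i : ℚ) - 1 - ((k + 1 : ℕ) : ℚ) - 1 = (i : ℚ) - 3 - k := by push_cast; ring
      have he2 : (i : ℚ) - 3 - k = (i : ℚ) - 2 - 1 - k := by ring
      rw [hn1, h2, he]
      push_cast
      ring
    have h1 : ∑ k ∈ range (n + 1 + 1), gchoose ((i : ℚ) - 1 - k) k * gchoose (k : ℚ) (n + 1 - k)
        = (∑ k ∈ range (n + 1), gchoose ((i : ℚ) - 3 - k) (k + 1) * gchoose ((k : ℚ) + 1) (n - k))
          + (∑ k ∈ range (n + 1), gchoose ((i : ℚ) - 2 - 1 - k) k * gchoose ((k : ℚ) + 1) (n - k))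
          + gchoose (((0 : ℕ)) : ℚ) (n + 1) := by
      rw [sum_range_succ' _ (n + 1), sum_congr rfl hmid, sum_add_distrib]
      simp only [Nat.cast_zero, Nat.sub_zero, gchoose_zero, one_mul]
    have h2 : ∑ k ∈ range (n + 1 + 1), gchoose (((i - 1 : ℕ)) - 1 - k) k * gchoose (k : ℚ) (n + 1 - k)
        = (∑ k ∈ range (n + 1), gchoose ((i : ℚ) - 3 - k) (k + 1) * gchoose ((k : ℚ) + 1) (n - k))
          + gchoose (((0 : ℕ)) : ℚ) (n + 1) := by
      rw [sum_range_succ' _ (n + 1)]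
      congr 1
      · apply sum_congr rfl
        intro k hk
        have hn1 : n + 1 - (k + 1) = n - k := by omega
        have he : ((i - 1 : ℕ) : ℚ) - 1 - ((k + 1 : ℕ) : ℚ) = (i : ℚ) - 3 - k := by
          rw [hcast]; push_cast; ring
        rw [hn1, he]
        push_cast
        ring
      · simp [gchoose_zero]
    have h3 : ∑ k ∈ range (n + 1), gchoose (((i - 1 : ℕ)) - 1 - k) k * gchoose (k : ℚ) (n - k)
        = ∑ k ∈ range (n + 1), gchoose ((i : ℚ) - 2 - k) k * gchoose (k : ℚ) (n - k) := by
      apply sum_congr rfl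
      intro k hk
      have he : ((i - 1 : ℕ) : ℚ) - 1 - k = (i : ℚ) - 2 - k := by rw [hcast]; ring
      rw [he]
    rw [h1, h2, h3, dagger n ((i : ℚ) - 2)]
    ring
end

section
/- Let α_0 = 1, α_1, α_2, … be a sequence in a commutative ring. Define M_{0,j} = 1, M_{i,0} = α_i, and M_{i,j} = M_{i−1,j} + M_{i,j−1} for i,j ≥ 1; let L be the lower-triangular matrix with L_{i,j} = M_{i−j,j} for i ≥ j ≥ 0 and 0 above the diagonal, and U the upper-triangular matrix with U_{i,j} = C(j,i) for j ≥ i and 0 below. Then for all i, j: M_{i,j} = Σ_k L_{i,k}·U_{k,j}. -/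
open Finset

lemma M_key (R : Type*) [CommRing R] (M : ℕ → ℕ → R) (hM0 : ∀ j, M 0 j = 1)
    (hMrec : ∀ i j, 1 ≤ i → 1 ≤ j → M i j = M (i - 1) j + M i (j - 1)) :
    ∀ i j a, M i (j + a) = ∑ k ∈ Finset.range (i + 1), M (i - k) (k + a) * (j.choose k : R) := by
  intro i
  induction i with
  | zero => intro j a; simp [hM0]
  | succ i ih =>
    intro j
    induction j with
    | zero =>
      intro a
      rw [Finset.sum_eq_single 0]
      · simp
      · intro k hk hk0
        simp [Nat.choose_eq_zero_of_lt (Nat.pos_of_ne_zero hk0)]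
      · simp
    | succ j ihj =>
      intro a
      have hrec := hMrec (i + 1) (j + 1 + a) (by omega) (by omega)
      simp only [Nat.add_sub_cancel_left, Nat.succ_sub_one] at hrec
      have h1 : i + 1 - 1 = i := rfl
      have h2 : j + 1 + a - 1 = j + a := by omega
      rw [hrec, h2]
      rw [Finset.sum_range_succ']
      have hterm : ∀ k, M (i + 1 - (k + 1)) (k + 1 + a) * ((j + 1).choose (k + 1) : R)
          = M (i - k) (k + (a + 1)) * (j.choose k : R)
            + M (i + 1 - (k + 1)) (k + 1 + a) * (j.choose (k + 1) : R) := by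
        intro k
        have : i + 1 - (k + 1) = i - k := by omega
        rw [Nat.choose_succ_succ, Nat.cast_add, mul_add, this]
        have : k + 1 + a = k + (a + 1) := by omega
        rw [this]
      rw [Finset.sum_congr rfl (fun k _ => hterm k), Finset.sum_add_distrib]
      have e1 : ∑ k ∈ Finset.range (i + 1), M (i - k) (k + (a + 1)) * (j.choose k : R)
          = M i (j + (a + 1)) := (ih j (a + 1)).symm
      have e2 : (∑ k ∈ Finset.range (i + 1),
            M (i + 1 - (k + 1)) (k + 1 + a) * (j.choose (k + 1) : R))
          + M (i + 1 - 0) (0 + a) * ((j + 1).choose 0 : R)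
          = M (i + 1) (j + a) := by
        rw [show (((j + 1).choose 0 : ℕ) : R) = (j.choose 0 : R) by simp,
          ← Finset.sum_range_succ' (fun k => M (i + 1 - k) (k + a) * (j.choose k : R)) (i + 1),
          ← ihj a]
      calc M i (j + 1 + a) + M (i + 1) (j + a)
          = M i (j + (a + 1)) + M (i + 1) (j + a) := by ring_nf
        _ = _ := by rw [← e1, ← e2]; push_cast; ring
      
theorem M_eq_LU (R : Type*) [CommRing R] (α : ℕ → R) (hα : α 0 = 1)
    (M : ℕ → ℕ → R) (hM0 : ∀ j, M 0 j = 1) (hMα : ∀ i, M i 0 = α i)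
    (hMrec : ∀ i j, 1 ≤ i → 1 ≤ j → M i j = M (i - 1) j + M i (j - 1))
    (L : ℕ → ℕ → R) (hL : ∀ i j, j ≤ i → L i j = M (i - j) j) (hL' : ∀ i j, i < j → L i j = 0)
    (Umat : ℕ → ℕ → R) (hU : ∀ i j, i ≤ j → Umat i j = (j.choose i : R))
    (hU' : ∀ i j, j < i → Umat i j = 0) :
    ∀ i j, M i j = ∑ k ∈ Finset.range (min i j + 1), L i k * Umat k j := by
  intro i j
  have hUall : ∀ k, Umat k j = (j.choose k : R) := by
    intro k
    rcases le_or_gt k j with h | h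
    · exact hU k j h
    · rw [hU' k j h, Nat.choose_eq_zero_of_lt h, Nat.cast_zero]
  have key := M_key R M hM0 hMrec i j 0
  simp only [Nat.add_zero] at key
  rw [key]
  rw [← Finset.sum_subset (Finset.range_subset_range.mpr (by omega : min i j + 1 ≤ i + 1))]
  · apply Finset.sum_congr rfl
    intro k hk
    rw [Finset.mem_range] at hk
    rw [hL i k (by omega), hUall k]
  · intro k hk hk'
    rw [Finset.mem_range] at hk hk'
    have : j < k := by omega
    rw [Nat.choose_eq_zero_of_lt this, Nat.cast_zero, mul_zero]
end
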